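/- arXiv:2003.01016 — 2 statements merged into one kernel-verified Lean document; each statement's English description precedes it below -/
import Mathlib

section
/- Let s, r be positive integers with s dividing r, and let (a_{ij})_{1≤i,j≤r} be real numbers of the form a_{ij} = f(|i-j|) for some function f : {0,...,r-1} → ℝ (a symmetric Toeplitz array). Define γ(k) = 1 - 1/s if k mod s = 0 and γ(k) = -1/s otherwise. Then ∑_{i=1}^r ∑_{j=1}^r γ(|i-j|) a_{ij} ≥ 0 whenever the array (a_{ij}) is a covariance-type array, i.e., a_{ij} = E[Y_i Y_j] for some square-integrable random variables Y_1,...,Y_r. Equivalently, ∑_{k=-r+1}^{r-1} (1 - |k|/r) γ(|k|) f(|k|) ≥ 0 for f(|k|) = E[Y_0 Y_k] with (Y_k) stationary. -/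
/-!
Writing `v u i = [i ≡ u mod s] - 1/s`, the weight `γ(|i - j|) = [i ≡ j mod s] - 1/s` factors as
`∑_{u < s} v u i * v u j`. The weighted sum is therefore `∑_{u < s} E[(∑_i v u i * Y_i)²] ≥ 0`.
-/

open MeasureTheory

theorem natAbs_sub_mod_eq_zero_iff {s i j : ℕ} :
    ((i : ℤ) - j).natAbs % s = 0 ↔ i % s = j % s := by
  rw [← Nat.dvd_iff_mod_eq_zero, ← Int.natCast_dvd_natCast, Int.dvd_natAbs, ← Nat.modEq_iff_dvd]
  exact eq_comm

theorem sum_residue_indicator_mul {s : ℕ} (hs : 0 < s) (i j : ℕ) :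
    ∑ u ∈ Finset.range s,
      ((if i % s = u then 1 else 0) - 1 / (s : ℝ)) * ((if j % s = u then 1 else 0) - 1 / (s : ℝ)) =
      if i % s = j % s then 1 - 1 / (s : ℝ) else -(1 / (s : ℝ)) := by
  have hi : i % s ∈ Finset.range s := Finset.mem_range.2 (Nat.mod_lt _ hs)
  have hj : j % s ∈ Finset.range s := Finset.mem_range.2 (Nat.mod_lt _ hs)
  have hs0 : (s : ℝ) ≠ 0 := by positivity
  simp only [sub_mul, mul_sub, ite_mul, one_mul, zero_mul, mul_ite, mul_one, mul_zero,
    Finset.sum_sub_distrib, Finset.sum_ite_eq, hi, hj, if_true, Finset.sum_const,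
    Finset.card_range, nsmul_eq_mul]
  split_ifs <;> field_simp <;> ring

theorem integral_sq_sum_mul {Ω ι : Type*} [MeasurableSpace Ω] {μ : Measure Ω}
    {Y : ι → Ω → ℝ} (hint : ∀ i j, Integrable (fun ω => Y i ω * Y j ω) μ)
    (S : Finset ι) (c : ι → ℝ) :
    ∫ ω, (∑ i ∈ S, c i * Y i ω) ^ 2 ∂μ =
      ∑ i ∈ S, ∑ j ∈ S, c i * c j * ∫ ω, Y i ω * Y j ω ∂μ := by
  have hint' : ∀ i j, Integrable (fun ω => c i * c j * (Y i ω * Y j ω)) μ :=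
    fun i j => (hint i j).const_mul _
  calc ∫ ω, (∑ i ∈ S, c i * Y i ω) ^ 2 ∂μ
      = ∫ ω, ∑ i ∈ S, ∑ j ∈ S, c i * c j * (Y i ω * Y j ω) ∂μ := by
        refine integral_congr_ae (.of_forall fun ω => ?_)
        simp only [sq, Finset.sum_mul_sum]
        exact Finset.sum_congr rfl fun i _ => Finset.sum_congr rfl fun j _ => by ring
    _ = ∑ i ∈ S, ∑ j ∈ S, c i * c j * ∫ ω, Y i ω * Y j ω ∂μ := by
        rw [integral_finsetSum _ fun i _ => integrable_finsetSum _ fun j _ => hint' i j]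
        refine Finset.sum_congr rfl fun i _ => ?_
        rw [integral_finsetSum _ fun j _ => hint' i j]
        simp only [integral_const_mul]

theorem stmt1_general {Ω : Type*} [MeasurableSpace Ω] (μ : Measure Ω)
    (s r : ℕ) (hs : 0 < s)
    (Y : ℕ → Ω → ℝ)
    (hint : ∀ i j, Integrable (fun ω => Y i ω * Y j ω) μ)
    (f : ℕ → ℝ)
    (htoeplitz : ∀ i j, 1 ≤ i → i ≤ r → 1 ≤ j → j ≤ r →
      ∫ ω, Y i ω * Y j ω ∂μ = f ((i : ℤ) - (j : ℤ)).natAbs) :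
    0 ≤ ∑ i ∈ Finset.Icc 1 r, ∑ j ∈ Finset.Icc 1 r,
      (if ((i : ℤ) - (j : ℤ)).natAbs % s = 0 then 1 - 1 / (s : ℝ) else -(1 / (s : ℝ))) *
        f ((i : ℤ) - (j : ℤ)).natAbs := by
  set v : ℕ → ℕ → ℝ := fun u i => (if i % s = u then 1 else 0) - 1 / (s : ℝ)
  have hsum : ∀ i ∈ Finset.Icc 1 r, ∀ j ∈ Finset.Icc 1 r,
      (if ((i : ℤ) - (j : ℤ)).natAbs % s = 0 then 1 - 1 / (s : ℝ) else -(1 / (s : ℝ))) *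
        f ((i : ℤ) - (j : ℤ)).natAbs =
      ∑ u ∈ Finset.range s, v u i * v u j * ∫ ω, Y i ω * Y j ω ∂μ := by
    intro i hi j hj
    rw [Finset.mem_Icc] at hi hj
    rw [← htoeplitz i j hi.1 hi.2 hj.1 hj.2, ← Finset.sum_mul, sum_residue_indicator_mul hs]
    simp only [natAbs_sub_mod_eq_zero_iff]
  rw [Finset.sum_congr rfl fun i hi => Finset.sum_congr rfl (hsum i hi)]
  simp_rw [Finset.sum_comm (s := Finset.Icc 1 r) (t := Finset.range s)]
  exact Finset.sum_nonneg fun u _ => by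
    rw [← integral_sq_sum_mul hint]
    exact integral_nonneg fun ω => sq_nonneg _

/-- nonnegativity of the γ-weighted sum of a stationary covariance array. -/
theorem stmt1 {Ω : Type*} [MeasurableSpace Ω] (μ : Measure Ω) [IsProbabilityMeasure μ]
    (s r : ℕ) (hs : 0 < s) (hr : 0 < r) (hdvd : s ∣ r)
    (Y : ℕ → Ω → ℝ) (hmeas : ∀ i, Measurable (Y i))
    (hint : ∀ i j, Integrable (fun ω => Y i ω * Y j ω) μ)
    (f : ℕ → ℝ)
    (htoeplitz : ∀ i j, 1 ≤ i → i ≤ r → 1 ≤ j → j ≤ r →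
      ∫ ω, Y i ω * Y j ω ∂μ = f ((i : ℤ) - (j : ℤ)).natAbs) :
    0 ≤ ∑ i ∈ Finset.Icc 1 r, ∑ j ∈ Finset.Icc 1 r,
      (if ((i : ℤ) - (j : ℤ)).natAbs % s = 0 then 1 - 1 / (s : ℝ) else -(1 / (s : ℝ))) *
        f ((i : ℤ) - (j : ℤ)).natAbs :=
  stmt1_general μ s r hs Y hint f htoeplitz
end

section
/- Let (Y_i)_{1≤i≤r} be second-order stationary square-integrable real random variables, let s divide r, and let c(k) = Cov(Y_0, Y_k). Then the 'disjoint-blocks' variance dominates the 'sliding-blocks' variance in the sense that Var(∑_{i=1}^{r/s} Y_{(i-1)s+1}) / (r/s) ≥ Var(∑_{i=1}^{r} Y_i) / (r·s), in the pre-asymptotic form s·∑_{k=-r+1}^{r-1} 1_{k mod s = 0}(1-|k|/r) c(k) ≥ ∑_{k=-r+1}^{r-1} (1-|k|/r) c(k). -/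
open MeasureTheory

private lemma mul_int {Ω : Type*} [MeasurableSpace Ω] {μ : Measure Ω} {f g : Ω → ℝ}
    (hf : MemLp f 2 μ) (hg : MemLp g 2 μ) : Integrable (fun ω => f ω * g ω) μ := by
  refine (hf.integrable_sq.add hg.integrable_sq).mono'
    (hf.aestronglyMeasurable.mul hg.aestronglyMeasurable) ?_
  filter_upwards with ω
  have h1 : ‖f ω * g ω‖ = |f ω| * |g ω| := by rw [norm_mul]; rfl
  rw [h1]
  simp only [Pi.add_apply]
  nlinarith [sq_nonneg (|f ω| - |g ω|), sq_abs (f ω), sq_abs (g ω)]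

private lemma card_pairs (r : ℕ) (k : ℤ) (hk : k ∈ Finset.Icc (-(r : ℤ) + 1) ((r : ℤ) - 1)) :
    (((Finset.Icc (1:ℤ) r) ×ˢ (Finset.Icc (1:ℤ) r)).filter (fun p => p.1 - p.2 = k)).card
      = r - k.natAbs := by
  simp only [Finset.mem_Icc] at hk
  have hset : ((Finset.Icc (1:ℤ) r) ×ˢ (Finset.Icc (1:ℤ) r)).filter (fun p => p.1 - p.2 = k)
      = (Finset.Icc (max 1 (1+k)) (min (r:ℤ) (r+k))).image (fun i => (i, i - k)) := by
    ext p
    simp only [Finset.mem_filter, Finset.mem_product, Finset.mem_Icc, Finset.mem_image,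
      max_le_iff, le_min_iff, Prod.ext_iff]
    constructor
    · rintro ⟨⟨⟨h1, h2⟩, h3, h4⟩, h5⟩
      exact ⟨p.1, ⟨⟨by omega, by omega⟩, by omega, by omega⟩, rfl, by omega⟩
    · rintro ⟨i, ⟨⟨h1, h2⟩, h3, h4⟩, h5, h6⟩
      refine ⟨⟨⟨by omega, by omega⟩, by omega, by omega⟩, by omega⟩
  rw [hset, Finset.card_image_of_injective _ (fun a b hab => by simpa [Prod.ext_iff] using hab),
    Int.card_Icc]
  rcases le_or_gt 0 k with h | h
  · rw [max_eq_right (by omega), min_eq_left (by omega)]; omega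
  · rw [max_eq_left (by omega), min_eq_right (by omega)]; omega

private lemma count_lemma (r : ℕ) (g : ℤ → ℝ) :
    ∑ p ∈ (Finset.Icc (1:ℤ) r) ×ˢ (Finset.Icc (1:ℤ) r), g (p.1 - p.2)
      = ∑ k ∈ Finset.Icc (-(r : ℤ) + 1) ((r : ℤ) - 1), ((r : ℝ) - (k.natAbs : ℝ)) * g k := by
  have hmaps : ∀ p ∈ (Finset.Icc (1:ℤ) r) ×ˢ (Finset.Icc (1:ℤ) r),
      p.1 - p.2 ∈ Finset.Icc (-(r : ℤ) + 1) ((r : ℤ) - 1) := by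
    intro p hp
    simp only [Finset.mem_product, Finset.mem_Icc] at hp ⊢
    omega
  rw [← Finset.sum_fiberwise_of_maps_to hmaps (fun p => g (p.1 - p.2))]
  refine Finset.sum_congr rfl fun k hk => ?_
  have : ∑ p ∈ ((Finset.Icc (1:ℤ) r) ×ˢ (Finset.Icc (1:ℤ) r)).filter (fun p => p.1 - p.2 = k),
      g (p.1 - p.2)
      = ∑ p ∈ ((Finset.Icc (1:ℤ) r) ×ˢ (Finset.Icc (1:ℤ) r)).filter (fun p => p.1 - p.2 = k),
      g k := by
    refine Finset.sum_congr rfl fun p hp => ?_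
    rw [(Finset.mem_filter.mp hp).2]
  rw [this, Finset.sum_const, card_pairs r k hk, nsmul_eq_mul]
  have hle : k.natAbs ≤ r := by
    simp only [Finset.mem_Icc] at hk; omega
  push_cast [hle]
  ring

/-- the disjoint-blocks pre-asymptotic variance dominates the sliding-blocks one. -/
theorem stmt2 {Ω : Type*} [MeasurableSpace Ω] (μ : Measure Ω) [IsProbabilityMeasure μ]
    (s r : ℕ) (hs : 0 < s) (hr : 0 < r) (hdvd : s ∣ r)
    (Y : ℤ → Ω → ℝ) (hmeas : ∀ i, Measurable (Y i))
    (hL2 : ∀ i, MemLp (Y i) 2 μ)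
    (c : ℕ → ℝ)
    (hcov : ∀ i j : ℤ,
      ∫ ω, Y i ω * Y j ω ∂μ - (∫ ω, Y i ω ∂μ) * (∫ ω, Y j ω ∂μ) = c (i - j).natAbs) :
    ∑ k ∈ Finset.Icc (-(r : ℤ) + 1) ((r : ℤ) - 1), (1 - |(k : ℝ)| / r) * c k.natAbs
      ≤ (s : ℝ) * ∑ k ∈ Finset.Icc (-(r : ℤ) + 1) ((r : ℤ) - 1),
          (if k % (s : ℤ) = 0 then (1 : ℝ) else 0) * (1 - |(k : ℝ)| / r) * c k.natAbs := by
  classical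
  set m : ℤ → ℝ := fun i => ∫ ω, Y i ω ∂μ with hm
  set X : ℤ → Ω → ℝ := fun i ω => Y i ω - m i with hX
  have hX2 : ∀ i, MemLp (X i) 2 μ := fun i => (hL2 i).sub (memLp_const _)
  have hXcov : ∀ i j : ℤ, ∫ ω, X i ω * X j ω ∂μ = c (i - j).natAbs := by
    intro i j
    have hYi : Integrable (Y i) μ := (hL2 i).integrable (by norm_num)
    have hYj : Integrable (Y j) μ := (hL2 j).integrable (by norm_num)
    have hmul : Integrable (fun ω => Y i ω * Y j ω) μ := mul_int (hL2 i) (hL2 j)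
    have hA : Integrable (fun ω => Y i ω * Y j ω - m i * Y j ω) μ := hmul.sub (hYj.const_mul _)
    have hB : Integrable (fun ω => m j * Y i ω - m i * m j) μ :=
      (hYi.const_mul _).sub (integrable_const _)
    have step : ∫ ω, X i ω * X j ω ∂μ
        = ∫ ω, ((Y i ω * Y j ω - m i * Y j ω) - (m j * Y i ω - m i * m j)) ∂μ :=
      congrArg _ (funext fun ω => by simp only [hX]; ring)
    rw [step, integral_sub hA hB, integral_sub hmul (hYj.const_mul _),
      integral_sub (hYi.const_mul _) (integrable_const _), integral_const_mul,
      integral_const_mul, integral_const]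
    have := hcov i j
    simp only [measure_univ, probReal_univ, ENNReal.toReal_one, one_smul, ← hm] at *
    linarith
  set F : Finset ℤ := Finset.Icc (1:ℤ) r with hF
  set T : Finset ℤ := Finset.Ico (0:ℤ) (s:ℤ) with hT
  set A : ℤ → Finset ℤ := fun t => F.filter (fun i => i % (s:ℤ) = t) with hA
  have hsum2 : ∀ G : Finset ℤ, ∫ ω, (∑ i ∈ G, X i ω)^2 ∂μ
      = ∑ p ∈ G ×ˢ G, c ((p.1 - p.2).natAbs) := by
    intro G
    have hpt : ∀ ω, (∑ i ∈ G, X i ω)^2 = ∑ p ∈ G ×ˢ G, X p.1 ω * X p.2 ω := by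
      intro ω
      rw [sq, Finset.sum_mul_sum, Finset.sum_product]
    simp_rw [hpt]
    rw [integral_finset_sum _ (fun p _ => mul_int (hX2 p.1) (hX2 p.2))]
    exact Finset.sum_congr rfl fun p _ => hXcov p.1 p.2
  -- pointwise splitting into blocks
  have hmapsT : ∀ i ∈ F, i % (s:ℤ) ∈ T := by
    intro i _
    simp only [hT, Finset.mem_Ico]
    exact ⟨Int.emod_nonneg i (by exact_mod_cast hs.ne'), Int.emod_lt_of_pos i (by exact_mod_cast hs)⟩
  have hsplit : ∀ ω, ∑ t ∈ T, ∑ i ∈ A t, X i ω = ∑ i ∈ F, X i ω := fun ω =>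
    Finset.sum_fiberwise_of_maps_to hmapsT (fun i => X i ω)
  -- Cauchy-Schwarz pointwise
  have hCS : ∀ ω, (∑ i ∈ F, X i ω)^2 ≤ (s:ℝ) * ∑ t ∈ T, (∑ i ∈ A t, X i ω)^2 := by
    intro ω
    rw [← hsplit ω]
    have := sq_sum_le_card_mul_sum_sq (s := T) (f := fun t => ∑ i ∈ A t, X i ω)
    have hcard : (T.card : ℝ) = (s : ℝ) := by
      simp [hT, Int.card_Ico]
    rwa [hcard] at this
  have hL2sum : ∀ G : Finset ℤ, MemLp (fun ω => ∑ i ∈ G, X i ω) 2 μ := fun G =>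
    memLp_finset_sum G (fun i _ => hX2 i)
  have hint1 : Integrable (fun ω => (∑ i ∈ F, X i ω)^2) μ := (hL2sum F).integrable_sq
  have hint2 : Integrable (fun ω => (s:ℝ) * ∑ t ∈ T, (∑ i ∈ A t, X i ω)^2) μ :=
    (integrable_finset_sum _ (fun t _ => (hL2sum (A t)).integrable_sq)).const_mul _
  have hineq : ∫ ω, (∑ i ∈ F, X i ω)^2 ∂μ
      ≤ ∫ ω, (s:ℝ) * ∑ t ∈ T, (∑ i ∈ A t, X i ω)^2 ∂μ :=
    integral_mono hint1 hint2 hCS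
  rw [hsum2 F, integral_const_mul,
    integral_finset_sum _ (fun t _ => (hL2sum (A t)).integrable_sq)] at hineq
  simp_rw [hsum2] at hineq
  -- rewrite block double sum as filtered sum over F ×ˢ F
  have hblocks : ∑ t ∈ T, ∑ p ∈ (A t) ×ˢ (A t), c ((p.1 - p.2).natAbs)
      = ∑ p ∈ (F ×ˢ F).filter (fun p => (p.1 - p.2) % (s:ℤ) = 0), c ((p.1 - p.2).natAbs) := by
    have hmaps2 : ∀ p ∈ (F ×ˢ F).filter (fun p : ℤ × ℤ => (p.1 - p.2) % (s:ℤ) = 0),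
        p.1 % (s:ℤ) ∈ T := by
      intro p hp
      exact hmapsT p.1 (Finset.mem_product.mp (Finset.mem_filter.mp hp).1).1
    rw [← Finset.sum_fiberwise_of_maps_to hmaps2 (fun p => c ((p.1 - p.2).natAbs))]
    refine Finset.sum_congr rfl fun t _ => ?_
    have hsetT : (((F ×ˢ F).filter (fun p : ℤ × ℤ => (p.1 - p.2) % (s:ℤ) = 0)).filter
        (fun p => p.1 % (s:ℤ) = t)) = (A t) ×ˢ (A t) := by
      ext p
      simp only [Finset.mem_filter, Finset.mem_product, hA]
      constructor
      · intro h
        obtain ⟨⟨⟨hp1, hp2⟩, hmod⟩, ht⟩ := h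
        have h2 : p.1 % (s:ℤ) = p.2 % (s:ℤ) :=
          Int.emod_eq_emod_iff_emod_sub_eq_zero.mpr hmod
        exact ⟨⟨hp1, ht⟩, hp2, h2 ▸ ht⟩
      · intro h
        obtain ⟨⟨hp1, ht1⟩, hp2, ht2⟩ := h
        exact ⟨⟨⟨hp1, hp2⟩,
          Int.emod_eq_emod_iff_emod_sub_eq_zero.mp (ht1.trans ht2.symm)⟩, ht1⟩
    rw [hsetT]
  rw [hblocks] at hineq
  -- convert filtered sum via indicator
  have hfilter : ∑ p ∈ (F ×ˢ F).filter (fun p => (p.1 - p.2) % (s:ℤ) = 0),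
      c ((p.1 - p.2).natAbs)
      = ∑ p ∈ F ×ˢ F, (if (p.1 - p.2) % (s:ℤ) = 0 then (1:ℝ) else 0) * c ((p.1 - p.2).natAbs) := by
    rw [Finset.sum_filter]
    refine Finset.sum_congr rfl fun p _ => ?_
    split <;> simp
  rw [hfilter] at hineq
  rw [count_lemma r (fun k => c k.natAbs),
    count_lemma r (fun k => (if k % (s:ℤ) = 0 then (1:ℝ) else 0) * c k.natAbs)] at hineq
  -- final arithmetic: divide by r
  have hr' : (0:ℝ) < r := by exact_mod_cast hr
  have e1 : ∑ k ∈ Finset.Icc (-(r : ℤ) + 1) ((r : ℤ) - 1), (1 - |(k : ℝ)| / r) * c k.natAbs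
      = (1/r) * ∑ k ∈ Finset.Icc (-(r : ℤ) + 1) ((r : ℤ) - 1),
          ((r : ℝ) - (k.natAbs : ℝ)) * c k.natAbs := by
    rw [Finset.mul_sum]
    refine Finset.sum_congr rfl fun k _ => ?_
    have habs : |(k : ℝ)| = (k.natAbs : ℝ) := by
      rw [Nat.cast_natAbs]; push_cast; ring
    rw [habs]
    field_simp
  have e2 : ∑ k ∈ Finset.Icc (-(r : ℤ) + 1) ((r : ℤ) - 1),
        (if k % (s : ℤ) = 0 then (1 : ℝ) else 0) * (1 - |(k : ℝ)| / r) * c k.natAbs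
      = (1/r) * ∑ k ∈ Finset.Icc (-(r : ℤ) + 1) ((r : ℤ) - 1),
          ((r : ℝ) - (k.natAbs : ℝ)) * ((if k % (s:ℤ) = 0 then (1:ℝ) else 0) * c k.natAbs) := by
    rw [Finset.mul_sum]
    refine Finset.sum_congr rfl fun k _ => ?_
    have habs : |(k : ℝ)| = (k.natAbs : ℝ) := by
      rw [Nat.cast_natAbs]; push_cast; ring
    rw [habs]
    field_simp
  rw [e1, e2]
  have hnn : (0:ℝ) ≤ 1/r := by positivity
  calc (1/r) * ∑ k ∈ Finset.Icc (-(r : ℤ) + 1) ((r : ℤ) - 1),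
          ((r : ℝ) - (k.natAbs : ℝ)) * c k.natAbs
      ≤ (1/r) * ((s:ℝ) * ∑ k ∈ Finset.Icc (-(r : ℤ) + 1) ((r : ℤ) - 1),
          ((r : ℝ) - (k.natAbs : ℝ)) * ((if k % (s:ℤ) = 0 then (1:ℝ) else 0) * c k.natAbs)) :=
        mul_le_mul_of_nonneg_left hineq hnn
    _ = (s:ℝ) * ((1/r) * ∑ k ∈ Finset.Icc (-(r : ℤ) + 1) ((r : ℤ) - 1),
          ((r : ℝ) - (k.natAbs : ℝ)) * ((if k % (s:ℤ) = 0 then (1:ℝ) else 0) * c k.natAbs)) := by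
        ring
end
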